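/- arXiv:2307.09762 — 2 statements merged into one kernel-verified Lean document; each statement's English description precedes it below -/
import Mathlib

section
/- Let X_1, ..., X_n be independent real-valued random variables with finite variances such that |X_i| ≤ B almost surely for all i, for some constant B > 0. Let V = Σ_{i=1}^n E[X_i^2]. Then for every t ≥ 0, P( Σ_{i=1}^n (X_i − E[X_i]) ≥ t ) ≤ exp( −t² / (2(V + tB/3)) ), and likewise P( Σ_{i=1}^n (X_i − E[X_i]) ≤ −t ) ≤ exp( −t² / (2(V + tB/3)) ). -/
open MeasureTheory ProbabilityTheory

private lemma bern_summable_shift (x : ℝ) :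
    Summable (fun n : ℕ => x ^ (n + 2) / (Nat.factorial (n + 2))) :=
  (summable_nat_add_iff 2).2 (Real.summable_pow_div_factorial x)

private lemma bern_exp_tail (x : ℝ) :
    Real.exp x - 1 - x = ∑' n : ℕ, x ^ (n + 2) / (Nat.factorial (n + 2)) := by
  have h0 : Real.exp x = ∑' n : ℕ, x ^ n / (Nat.factorial n) := by
    rw [Real.exp_eq_exp_ℝ, NormedSpace.exp_eq_tsum_div]
  have hs := Real.summable_pow_div_factorial x
  have hs1 : Summable (fun n : ℕ => x ^ (n + 1) / (Nat.factorial (n + 1))) :=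
    (summable_nat_add_iff 1).2 hs
  rw [h0, Summable.tsum_eq_zero_add hs, Summable.tsum_eq_zero_add hs1]
  have : ∑' n : ℕ, x ^ (n + 1 + 1) / (Nat.factorial (n + 1 + 1)) = ∑' n : ℕ, x ^ (n + 2) / (Nat.factorial (n + 2)) := by
    congr 1
  simp only [this]
  norm_num [Nat.factorial]

private lemma bern_pointwise {u v : ℝ} (hu : 0 < u) (hv : |v| ≤ u) :
    Real.exp v - 1 - v ≤ v ^ 2 / u ^ 2 * (Real.exp u - 1 - u) := by
  rw [bern_exp_tail, bern_exp_tail, ← tsum_mul_left]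
  refine Summable.tsum_le_tsum (fun n => ?_) (bern_summable_shift v)
    ((bern_summable_shift u).mul_left _)
  have hfac : (0:ℝ) < ((Nat.factorial (n + 2)) : ℝ) := by exact_mod_cast (Nat.factorial_pos (n+2))
  rw [mul_div_assoc']
  rw [div_le_div_iff_of_pos_right hfac]
  have hrhs : v ^ 2 / u ^ 2 * u ^ (n + 2) = v ^ 2 * u ^ n := by
    rw [pow_add]
    field_simp
  rw [hrhs]
  calc v ^ (n + 2) ≤ |v ^ (n + 2)| := le_abs_self _
    _ = |v| ^ n * |v| ^ 2 := by rw [abs_pow, pow_add]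
    _ = |v| ^ n * v ^ 2 := by rw [sq_abs]
    _ ≤ u ^ n * v ^ 2 := by
        have := pow_le_pow_left₀ (abs_nonneg v) hv n
        nlinarith [sq_nonneg v]
    _ = v ^ 2 * u ^ n := by ring

private lemma bern_fact_bound : ∀ n : ℕ, 2 * 3 ^ n ≤ (Nat.factorial (n + 2))
  | 0 => le_refl 2
  | n + 1 => by
    have ih := bern_fact_bound n
    have h1 : 2 * 3 ^ (n + 1) = 3 * (2 * 3 ^ n) := by ring
    have h2 : (Nat.factorial (n + 3)) = (n + 3) * (Nat.factorial (n + 2)) := Nat.factorial_succ (n + 2)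
    calc 2 * 3 ^ (n + 1) = 3 * (2 * 3 ^ n) := h1
      _ ≤ 3 * (Nat.factorial (n + 2)) := Nat.mul_le_mul_left 3 ih
      _ ≤ (n + 3) * (Nat.factorial (n + 2)) := Nat.mul_le_mul_right _ (by omega)
      _ = (Nat.factorial (n + 1 + 2)) := h2.symm

private lemma bern_exp_bound2 {u : ℝ} (h0 : 0 ≤ u) (h3 : u < 3) :
    Real.exp u - 1 - u ≤ u ^ 2 / (2 * (1 - u / 3)) := by
  have hr0 : 0 ≤ u / 3 := by positivity
  have hr1 : u / 3 < 1 := by linarith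
  have hgeo : Summable (fun n : ℕ => (u / 3) ^ n) := summable_geometric_of_lt_one hr0 hr1
  rw [bern_exp_tail]
  have hrepr : u ^ 2 / (2 * (1 - u / 3)) = ∑' n : ℕ, u ^ 2 / 2 * (u / 3) ^ n := by
    rw [tsum_mul_left, tsum_geometric_of_lt_one hr0 hr1]
    have : (1 : ℝ) - u / 3 > 0 := by linarith
    field_simp
  rw [hrepr]
  refine Summable.tsum_le_tsum (fun n => ?_) (bern_summable_shift u) (hgeo.mul_left _)
  have h1 : u ^ 2 / 2 * (u / 3) ^ n = u ^ (n + 2) / (2 * 3 ^ n) := by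
    rw [div_pow, pow_add]
    field_simp
  rw [h1]
  have hb : (2 * 3 ^ n : ℝ) ≤ ((Nat.factorial (n + 2)) : ℝ) := by exact_mod_cast bern_fact_bound n
  have hpos : (0:ℝ) < 2 * 3 ^ n := by positivity
  exact div_le_div_of_nonneg_left (by positivity) hpos hb

private lemma bern_mgf_le {Ω : Type*} [MeasureSpace Ω] [IsProbabilityMeasure (ℙ : Measure Ω)]
    {X : Ω → ℝ} (hm : Measurable X) {B : ℝ} (hB : 0 < B)
    (hb : ∀ᵐ ω ∂ℙ, |X ω| ≤ B) {s : ℝ} (hs : 0 < s) :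
    mgf X ℙ s ≤ Real.exp (s * (∫ ω, X ω ∂ℙ) +
      (∫ ω, (X ω) ^ 2 ∂ℙ) * ((Real.exp (s * B) - 1 - s * B) / B ^ 2)) := by
  set c : ℝ := (Real.exp (s * B) - 1 - s * B) / B ^ 2 with hc
  have key : ∀ x : ℝ, |x| ≤ B → Real.exp (s * x) ≤ 1 + s * x + c * x ^ 2 := by
    intro x hx
    have hu : 0 < s * B := by positivity
    have hv : |s * x| ≤ s * B := by
      rw [abs_mul, abs_of_pos hs]
      exact mul_le_mul_of_nonneg_left hx hs.le
    have h := bern_pointwise hu hv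
    have he : (s * x) ^ 2 / (s * B) ^ 2 * (Real.exp (s * B) - 1 - s * B) = c * x ^ 2 := by
      rw [hc]
      field_simp
    rw [he] at h
    linarith
  have hintX : Integrable X ℙ :=
    Integrable.mono' (integrable_const B) hm.aestronglyMeasurable
      (hb.mono fun ω h => by rwa [Real.norm_eq_abs])
  have hintX2 : Integrable (fun ω => (X ω) ^ 2) ℙ :=
    Integrable.mono' (integrable_const (B ^ 2)) (hm.pow_const 2).aestronglyMeasurable
      (hb.mono fun ω h => by
        rw [Real.norm_eq_abs, abs_pow]
        exact pow_le_pow_left₀ (abs_nonneg _) h 2)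
  have hintE : Integrable (fun ω => Real.exp (s * X ω)) ℙ :=
    Integrable.mono' (integrable_const (Real.exp (s * B)))
      ((hm.const_mul s).exp.aestronglyMeasurable)
      (hb.mono fun ω h => by
        rw [Real.norm_eq_abs, Real.abs_exp]
        exact Real.exp_le_exp.2
          (mul_le_mul_of_nonneg_left (le_trans (le_abs_self _) h) hs.le))
  have hint1 : Integrable (fun ω => 1 + s * X ω) ℙ :=
    (integrable_const 1).add (hintX.const_mul s)
  have h1 : mgf X ℙ s ≤ 1 + s * (∫ ω, X ω ∂ℙ) + c * ∫ ω, (X ω) ^ 2 ∂ℙ := by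
    have hle : ∫ ω, Real.exp (s * X ω) ∂ℙ ≤ ∫ ω, (1 + s * X ω + c * (X ω) ^ 2) ∂ℙ := by
      refine integral_mono_ae hintE ?_ (hb.mono fun ω h => key _ h)
      exact hint1.add (hintX2.const_mul c)
    have heq : ∫ ω, (1 + s * X ω + c * (X ω) ^ 2) ∂ℙ
        = 1 + s * (∫ ω, X ω ∂ℙ) + c * ∫ ω, (X ω) ^ 2 ∂ℙ := by
      rw [integral_add hint1 (hintX2.const_mul c),
        integral_add (integrable_const 1) (hintX.const_mul s),
        integral_const, integral_const_mul, integral_const_mul]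
      simp
    calc mgf X ℙ s = ∫ ω, Real.exp (s * X ω) ∂ℙ := rfl
      _ ≤ _ := hle
      _ = _ := heq
  have h2 := Real.add_one_le_exp (s * (∫ ω, X ω ∂ℙ) + (∫ ω, (X ω) ^ 2 ∂ℙ) * c)
  calc mgf X ℙ s ≤ 1 + s * (∫ ω, X ω ∂ℙ) + c * ∫ ω, (X ω) ^ 2 ∂ℙ := h1
    _ ≤ Real.exp (s * (∫ ω, X ω ∂ℙ) + (∫ ω, (X ω) ^ 2 ∂ℙ) * c) := by linarith

private lemma bernstein_upper
    {Ω : Type*} [MeasureSpace Ω] [IsProbabilityMeasure (ℙ : Measure Ω)]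
    {n : ℕ} (X : Fin n → Ω → ℝ)
    (hmeas : ∀ i, Measurable (X i))
    (hindep : iIndepFun X ℙ)
    {B : ℝ} (hB : 0 < B)
    (hbound : ∀ i, ∀ᵐ ω ∂ℙ, |X i ω| ≤ B)
    (V : ℝ) (hV : V = ∑ i, ∫ ω, (X i ω) ^ 2 ∂ℙ)
    (t : ℝ) (ht : 0 ≤ t) :
    ℙ {ω | t ≤ ∑ i, (X i ω - ∫ ω', X i ω' ∂ℙ)} ≤
        ENNReal.ofReal (Real.exp (-t ^ 2 / (2 * (V + t * B / 3)))) := by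
  have hV0 : 0 ≤ V := by
    rw [hV]
    exact Finset.sum_nonneg fun i _ => integral_nonneg fun ω => sq_nonneg _
  rcases ht.eq_or_lt with rfl | htpos
  · simp only [ne_eq, OfNat.ofNat_ne_zero, not_false_eq_true, zero_pow, neg_zero, zero_div,
      Real.exp_zero, ENNReal.ofReal_one]
    exact prob_le_one
  -- notation
  set μi : Fin n → ℝ := fun i => ∫ ω, X i ω ∂ℙ with hμi
  set Y : Fin n → Ω → ℝ := fun i ω => X i ω - μi i with hY
  set S : Ω → ℝ := ∑ i, Y i with hS
  have hSapp : ∀ ω, S ω = ∑ i, (X i ω - ∫ ω', X i ω' ∂ℙ) := by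
    intro ω; rw [hS, Finset.sum_apply]
  have hset : {ω | t ≤ ∑ i, (X i ω - ∫ ω', X i ω' ∂ℙ)} = {ω | t ≤ S ω} := by
    ext ω; rw [Set.mem_setOf_eq, Set.mem_setOf_eq, hSapp]
  rw [hset]
  have hintX : ∀ i, Integrable (X i) ℙ := fun i =>
    Integrable.mono' (integrable_const B) (hmeas i).aestronglyMeasurable
      ((hbound i).mono fun ω h => by rwa [Real.norm_eq_abs])
  have hintX2 : ∀ i, Integrable (fun ω => (X i ω) ^ 2) ℙ := fun i =>
    Integrable.mono' (integrable_const (B ^ 2)) ((hmeas i).pow_const 2).aestronglyMeasurable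
      ((hbound i).mono fun ω h => by
        rw [Real.norm_eq_abs, abs_pow]
        exact pow_le_pow_left₀ (abs_nonneg _) h 2)
  rcases hV0.eq_or_lt with hVzero | hVpos
  · -- degenerate case: V = 0, all X i are a.e. zero
    have hterm : ∀ i : Fin n, ∫ ω, (X i ω) ^ 2 ∂ℙ = 0 := by
      intro i
      have := (Finset.sum_eq_zero_iff_of_nonneg
        (fun i _ => integral_nonneg fun ω => sq_nonneg (X i ω))).1 (hV ▸ hVzero.symm)
      exact this i (Finset.mem_univ i)
    have hXz : ∀ i : Fin n, X i =ᵐ[ℙ] 0 := by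
      intro i
      have h0 : (fun ω => (X i ω) ^ 2) =ᵐ[ℙ] 0 :=
        (integral_eq_zero_iff_of_nonneg (fun ω => sq_nonneg _) (hintX2 i)).1 (hterm i)
      filter_upwards [h0] with ω hω
      have : (X i ω) ^ 2 = 0 := hω
      simpa using pow_eq_zero_iff (n := 2) (by norm_num) |>.1 this
    have hμz : ∀ i, μi i = 0 := by
      intro i
      rw [hμi]
      simp only
      rw [integral_congr_ae (hXz i)]
      simp
    have hSz : ∀ᵐ ω ∂ℙ, S ω = 0 := by
      have hall : ∀ᵐ ω ∂ℙ, ∀ i, X i ω = 0 := ae_all_iff.2 hXz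
      filter_upwards [hall] with ω hω
      rw [hS, Finset.sum_apply]
      simp [hY, hω, hμz]
    have hnull : ℙ {ω | t ≤ S ω} = 0 := by
      refine measure_mono_null (fun ω hω => ?_) (ae_iff.1 hSz)
      simp only [Set.mem_setOf_eq] at hω ⊢
      intro h0
      rw [h0] at hω
      linarith
    rw [hnull]
    exact zero_le
  -- main case: V > 0
  set D : ℝ := V + t * B / 3 with hD
  have hDpos : 0 < D := by rw [hD]; positivity
  set s : ℝ := t / D with hs
  have hspos : 0 < s := div_pos htpos hDpos
  have hu3 : s * B < 3 := by
    rw [hs, div_mul_eq_mul_div, div_lt_iff₀ hDpos]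
    rw [hD]
    nlinarith
  -- measurability and boundedness of S
  have hμb : ∀ i, |μi i| ≤ B := by
    intro i
    have habs : |μi i| ≤ ∫ ω, |X i ω| ∂ℙ := by
      simpa [Real.norm_eq_abs] using norm_integral_le_integral_norm (μ := ℙ) (X i)
    calc |μi i| ≤ ∫ ω, |X i ω| ∂ℙ := habs
      _ ≤ ∫ _ω, B ∂ℙ := integral_mono_ae (hintX i).abs (integrable_const B) (hbound i)
      _ = B := by simp
  have hball : ∀ᵐ ω ∂ℙ, ∀ i, |X i ω| ≤ B := ae_all_iff.2 hbound
  have hSbound : ∀ᵐ ω ∂ℙ, S ω ≤ n * (2 * B) := by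
    filter_upwards [hball] with ω hω
    rw [hS, Finset.sum_apply]
    calc ∑ i, Y i ω ≤ |∑ i, Y i ω| := le_abs_self _
      _ ≤ ∑ i, |Y i ω| := Finset.abs_sum_le_sum_abs _ _
      _ ≤ ∑ _i : Fin n, 2 * B := by
          refine Finset.sum_le_sum fun i _ => ?_
          calc |Y i ω| = |X i ω - μi i| := rfl
            _ ≤ |X i ω| + |μi i| := abs_sub _ _
            _ ≤ B + B := add_le_add (hω i) (hμb i)
            _ = 2 * B := by ring
      _ = n * (2 * B) := by simp [Finset.sum_const, mul_comm]
  have hYmeas : ∀ i, Measurable (Y i) := fun i => (hmeas i).sub measurable_const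
  have hSmeas : Measurable S := by
    have h : S = fun ω => ∑ i, Y i ω := by ext ω; rw [hS, Finset.sum_apply]
    rw [h]
    exact Finset.measurable_sum _ fun i _ => hYmeas i
  have hintE : Integrable (fun ω => Real.exp (s * S ω)) ℙ :=
    Integrable.mono' (integrable_const (Real.exp (s * (n * (2 * B)))))
      ((hSmeas.const_mul s).exp.aestronglyMeasurable)
      (hSbound.mono fun ω h => by
        rw [Real.norm_eq_abs, Real.abs_exp]
        exact Real.exp_le_exp.2 (mul_le_mul_of_nonneg_left h hspos.le))
  -- Chernoff bound
  have chern := measure_ge_le_exp_mul_mgf (μ := ℙ) (X := S) (t := s) t hspos.le hintE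
  -- independence and mgf of the sum
  have hYindep : iIndepFun Y ℙ :=
    hindep.comp (fun i x => x - μi i) (fun i => measurable_id.sub measurable_const)
  have hmgfS : mgf S ℙ s = ∏ i, mgf (Y i) ℙ s := hYindep.mgf_sum hYmeas Finset.univ
  set c : ℝ := (Real.exp (s * B) - 1 - s * B) / B ^ 2 with hc
  have hYmgf : ∀ i, mgf (Y i) ℙ s ≤ Real.exp ((∫ ω, (X i ω) ^ 2 ∂ℙ) * c) := by
    intro i
    have hXi := bern_mgf_le (hmeas i) hB (hbound i) hspos
    have hYeq : mgf (Y i) ℙ s = mgf (X i) ℙ s / Real.exp (s * μi i) := by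
      rw [mgf, mgf]
      have : ∀ ω, Real.exp (s * Y i ω) = Real.exp (s * X i ω) / Real.exp (s * μi i) := by
        intro ω
        rw [hY]
        simp only
        rw [mul_sub, Real.exp_sub]
      simp_rw [this]
      rw [integral_div]
    rw [hYeq]
    rw [div_le_iff₀ (Real.exp_pos _), ← Real.exp_add]
    calc mgf (X i) ℙ s ≤
        Real.exp (s * (∫ ω, X i ω ∂ℙ) + (∫ ω, (X i ω) ^ 2 ∂ℙ) * c) := hXi
      _ = Real.exp ((∫ ω, (X i ω) ^ 2 ∂ℙ) * c + s * μi i) := by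
          rw [hμi]; ring_nf
  have hprod : mgf S ℙ s ≤ Real.exp (V * c) := by
    rw [hmgfS]
    calc ∏ i, mgf (Y i) ℙ s ≤ ∏ i, Real.exp ((∫ ω, (X i ω) ^ 2 ∂ℙ) * c) :=
          Finset.prod_le_prod (fun i _ => mgf_nonneg) (fun i _ => hYmgf i)
      _ = Real.exp (∑ i, (∫ ω, (X i ω) ^ 2 ∂ℙ) * c) := (Real.exp_sum _ _).symm
      _ = Real.exp (V * c) := by rw [hV, Finset.sum_mul]
  -- numeric optimization
  have hnum : -s * t + V * c ≤ -t ^ 2 / (2 * D) := by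
    have hu0 : (0:ℝ) ≤ s * B := by positivity
    have hφ := bern_exp_bound2 hu0 hu3
    have hcle : c ≤ s ^ 2 / (2 * (1 - s * B / 3)) := by
      rw [hc]
      rw [div_le_iff₀ (by positivity : (0:ℝ) < B ^ 2)]
      calc Real.exp (s * B) - 1 - s * B ≤ (s * B) ^ 2 / (2 * (1 - s * B / 3)) := hφ
        _ = s ^ 2 / (2 * (1 - s * B / 3)) * B ^ 2 := by ring
    have h13 : 1 - s * B / 3 = V / D := by
      rw [hs, hD]
      field_simp
      ring
    have hVc : V * c ≤ t ^ 2 / (2 * D) := by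
      calc V * c ≤ V * (s ^ 2 / (2 * (1 - s * B / 3))) :=
            mul_le_mul_of_nonneg_left hcle hV0
        _ = t ^ 2 / (2 * D) := by
            rw [h13, hs]
            field_simp
    have hst : s * t = t ^ 2 / D := by rw [hs]; field_simp
    rw [neg_mul, hst]
    have key : -t ^ 2 / (2 * D) = -(t ^ 2 / D) + t ^ 2 / (2 * D) := by
      field_simp
      ring
    rw [key]
    linarith
  -- assemble
  have hfinal : (ℙ {ω | t ≤ S ω}).toReal ≤ Real.exp (-t ^ 2 / (2 * D)) := by
    calc (ℙ {ω | t ≤ S ω}).toReal ≤ Real.exp (-s * t) * mgf S ℙ s := chern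
      _ ≤ Real.exp (-s * t) * Real.exp (V * c) := by
          exact mul_le_mul_of_nonneg_left hprod (Real.exp_pos _).le
      _ = Real.exp (-s * t + V * c) := (Real.exp_add _ _).symm
      _ ≤ Real.exp (-t ^ 2 / (2 * D)) := Real.exp_le_exp.2 hnum
  calc ℙ {ω | t ≤ S ω} = ENNReal.ofReal ((ℙ {ω | t ≤ S ω}).toReal) :=
        (ENNReal.ofReal_toReal (measure_ne_top _ _)).symm
    _ ≤ ENNReal.ofReal (Real.exp (-t ^ 2 / (2 * D))) := ENNReal.ofReal_le_ofReal hfinal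

/-- **Bernstein's inequality** for bounded independent random variables:
if `X 1, …, X n` are independent, have finite variances (`Memℒp 2`), and satisfy
`|X i| ≤ B` almost surely, then with `V = ∑ i, E[(X i)^2]`, for every `t ≥ 0`,
both tail probabilities `P(∑ (X i - E[X i]) ≥ t)` and `P(∑ (X i - E[X i]) ≤ -t)`
are bounded by `exp (-t² / (2 (V + t B / 3)))`. -/
theorem bernstein_inequality
    {Ω : Type*} [MeasureSpace Ω] [IsProbabilityMeasure (ℙ : Measure Ω)]
    {n : ℕ} (X : Fin n → Ω → ℝ)
    (hmeas : ∀ i, Measurable (X i))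
    (hindep : iIndepFun X ℙ)
    (hvar : ∀ i, MemLp (X i) 2 ℙ)
    {B : ℝ} (hB : 0 < B)
    (hbound : ∀ i, ∀ᵐ ω ∂ℙ, |X i ω| ≤ B)
    (V : ℝ) (hV : V = ∑ i, ∫ ω, (X i ω) ^ 2 ∂ℙ)
    (t : ℝ) (ht : 0 ≤ t) :
    ℙ {ω | t ≤ ∑ i, (X i ω - ∫ ω', X i ω' ∂ℙ)} ≤
        ENNReal.ofReal (Real.exp (-t ^ 2 / (2 * (V + t * B / 3)))) ∧
    ℙ {ω | ∑ i, (X i ω - ∫ ω', X i ω' ∂ℙ) ≤ -t} ≤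
        ENNReal.ofReal (Real.exp (-t ^ 2 / (2 * (V + t * B / 3)))) := by
  constructor
  · exact bernstein_upper X hmeas hindep hB hbound V hV t ht
  · have h2 := bernstein_upper (fun i => -X i) (fun i => (hmeas i).neg)
      (hindep.comp (fun _ => Neg.neg) (fun _ => measurable_neg)) hB
      (fun i => (hbound i).mono fun ω h => by simpa using h)
      V (by simpa using hV) t ht
    have hid : ∀ ω, ∑ i, ((fun i => -X i) i ω - ∫ ω', (fun i => -X i) i ω' ∂ℙ)
        = -∑ i, (X i ω - ∫ ω', X i ω' ∂ℙ) := by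
      intro ω
      rw [← Finset.sum_neg_distrib]
      refine Finset.sum_congr rfl fun i _ => ?_
      simp only [Pi.neg_apply, integral_neg]
      ring
    have hseteq : {ω | ∑ i, (X i ω - ∫ ω', X i ω' ∂ℙ) ≤ -t}
        = {ω | t ≤ ∑ i, ((fun i => -X i) i ω - ∫ ω', (fun i => -X i) i ω' ∂ℙ)} := by
      ext ω
      simp only [Set.mem_setOf_eq, hid ω]
      constructor
      · intro h; linarith
      · intro h; linarith
    rw [hseteq]
    exact h2
end

section
/- Let G be a weighted graph on the vertex set {1,…,n} (n ≥ 2), let 0 ≤ ε < 1, and let Ḡ be an ε-spectral sparsifier of G. Suppose the Laplacian eigenvalue–degree bounds hold for both G and Ḡ, i.e. for every m ∈ {2,…,n}: d_m(H) − Δ(H_{l_m}) ≤ λ_m(H) ≤ d_{m−1}(H) + (m−1)·a(H) − δ(H_{s_{m−1}}) for H ∈ {G, Ḡ}. Then for every i ∈ {2,…,n}: d_i(Ḡ) ≤ (1 + ε)·( d_{i−1}(G) + (i−1)·a(G) − δ(G_{s_{i−1}}) ) + Δ(Ḡ_{l_i}), and moreover d₁(Ḡ) ≤ (1 + ε)·d₁(G).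 -/
open Matrix

/-- The (weighted) degree of vertex `v` in the weighted graph with adjacency
matrix `A`. -/
def wdeg {n : ℕ} (A : Matrix (Fin n) (Fin n) ℝ) (v : Fin n) : ℝ := ∑ u, A v u

/-- The Laplacian matrix `L = diag(deg) - A` of a weighted graph. -/
def lap {n : ℕ} (A : Matrix (Fin n) (Fin n) ℝ) : Matrix (Fin n) (Fin n) ℝ :=
  Matrix.diagonal (wdeg A) - A

/-- `Δ(G_{l_{k+1}})` (1-based `m = k + 1`): the maximum degree of the subgraph of
`G` induced by the highest-degree vertices `σ k, σ (k+1), …, σ (n-1)`, where `σ`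
sorts the vertices by nondecreasing degree. -/
noncomputable def maxDegTop {n : ℕ} (A : Matrix (Fin n) (Fin n) ℝ)
    (σ : Equiv.Perm (Fin n)) (k : Fin n) : ℝ :=
  (Finset.Ici k).sup' ⟨k, Finset.mem_Ici.mpr le_rfl⟩
    fun j => ∑ j' ∈ Finset.Ici k, A (σ j) (σ j')

/-- `δ(G_{s_{k+1}})` (1-based `m = k + 1`): the minimum degree of the subgraph of
`G` induced by the lowest-degree vertices `σ 0, σ 1, …, σ k`, where `σ` sorts the
vertices by nondecreasing degree. -/
noncomputable def minDegBot {n : ℕ} (A : Matrix (Fin n) (Fin n) ℝ)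
    (σ : Equiv.Perm (Fin n)) (k : Fin n) : ℝ :=
  (Finset.Iic k).inf' ⟨k, Finset.mem_Iic.mpr le_rfl⟩
    fun j => ∑ j' ∈ Finset.Iic k, A (σ j) (σ j')

/-- `a(G)`: the maximal edge weight of the weighted graph `G`. -/
noncomputable def maxWeight {n : ℕ} (hn : 0 < n)
    (A : Matrix (Fin n) (Fin n) ℝ) : ℝ :=
  Finset.univ.sup' (Finset.univ_nonempty_iff.mpr ⟨(⟨0, hn⟩, ⟨0, hn⟩)⟩)
    fun p : Fin n × Fin n => A p.1 p.2


noncomputable def coordVec {n : ℕ} {B : Matrix (Fin n) (Fin n) ℝ} (hB : B.IsHermitian)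
    (x : Fin n → ℝ) : Fin n → ℝ :=
  star (hB.eigenvectorUnitary : Matrix (Fin n) (Fin n) ℝ) *ᵥ x

lemma coordVec_eq_vecMul {n : ℕ} {B : Matrix (Fin n) (Fin n) ℝ} (hB : B.IsHermitian)
    (x : Fin n → ℝ) :
    coordVec hB x = x ᵥ* (hB.eigenvectorUnitary : Matrix (Fin n) (Fin n) ℝ) := by
  rw [coordVec, Matrix.star_eq_conjTranspose, conjTranspose_eq_transpose_of_trivial,
    mulVec_transpose]

lemma norm_coordVec {n : ℕ} {B : Matrix (Fin n) (Fin n) ℝ} (hB : B.IsHermitian)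
    (x : Fin n → ℝ) : ∑ j, (coordVec hB x j)^2 = x ⬝ᵥ x := by
  have h1 : ∑ j, (coordVec hB x j)^2 = coordVec hB x ⬝ᵥ coordVec hB x := by
    simp [dotProduct, sq]
  rw [h1]
  nth_rewrite 1 [coordVec_eq_vecMul]
  rw [← dotProduct_mulVec x _ (coordVec hB x), coordVec, mulVec_mulVec,
    (Matrix.mem_unitaryGroup_iff).mp (hB.eigenvectorUnitary).2, one_mulVec]

lemma quad_coordVec {n : ℕ} {B : Matrix (Fin n) (Fin n) ℝ} (hB : B.IsHermitian)
    (x : Fin n → ℝ) :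
    x ⬝ᵥ B *ᵥ x = ∑ j, hB.eigenvalues j * (coordVec hB x j)^2 := by
  conv_lhs => rw [hB.spectral_theorem, Unitary.conjStarAlgAut_apply, ← mulVec_mulVec, ← mulVec_mulVec,
    dotProduct_mulVec x _ _, ← coordVec_eq_vecMul hB x]
  rw [← coordVec]
  simp only [dotProduct, mulVec_diagonal, Function.comp_apply, RCLike.ofReal_real_eq_id, id]
  exact Finset.sum_congr rfl fun j _ => by ring

lemma dotProduct_self_pos {n : ℕ} {x : Fin n → ℝ} (hx : x ≠ 0) : 0 < x ⬝ᵥ x := by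
  obtain ⟨j0, hj0⟩ : ∃ j, x j ≠ 0 := by
    by_contra h; push_neg at h; exact hx (funext h)
  have h2 : (0:ℝ) < x j0 ^ 2 := lt_of_le_of_ne (sq_nonneg _) (Ne.symm (pow_ne_zero 2 hj0))
  have : x ⬝ᵥ x = ∑ j, x j ^ 2 := by simp [dotProduct, sq]
  rw [this]
  exact Finset.sum_pos' (fun j _ => sq_nonneg _) ⟨j0, Finset.mem_univ _, h2⟩

lemma eig_comp {n : ℕ} {B C : Matrix (Fin n) (Fin n) ℝ} (hB : B.IsHermitian)
    (hC : C.IsHermitian) (c : ℝ) (hc : 0 ≤ c)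
    (h : ∀ x : Fin n → ℝ, x ⬝ᵥ B.mulVec x ≤ c * (x ⬝ᵥ C.mulVec x))
    (p q : Equiv.Perm (Fin n))
    (hp : Monotone (hB.eigenvalues ∘ p)) (hq : Monotone (hC.eigenvalues ∘ q))
    (i : Fin n) : hB.eigenvalues (p i) ≤ c * hC.eigenvalues (q i) := by
  classical
  set F : (Fin n → ℝ) →ₗ[ℝ] ({j : Fin n // j ≠ i} → ℝ) :=
    { toFun := fun x j => if (j : Fin n) < i then coordVec hB x (p j) else coordVec hC x (q j)
      map_add' := fun x y => by
        funext j; by_cases hj : (j : Fin n) < i <;> simp [coordVec, mulVec_add, hj]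
      map_smul' := fun r x => by
        funext j; by_cases hj : (j : Fin n) < i <;> simp [coordVec, mulVec_smul, hj] } with hF
  have hninj : ¬ Function.Injective F := by
    intro hinj
    have := LinearMap.finrank_le_finrank_of_injective hinj
    rw [Module.finrank_fintype_fun_eq_card, Module.finrank_fintype_fun_eq_card,
      Fintype.card_fin] at this
    have hcard : Fintype.card {j : Fin n // j ≠ i} = n - 1 := by
      simp [Fintype.card_subtype_compl]
    rw [hcard] at this
    have : 0 < n := i.pos
    omega
  rw [← LinearMap.ker_eq_bot] at hninj
  obtain ⟨x, hxker, hx⟩ := (Submodule.ne_bot_iff _).mp hninj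
  have hFx : ∀ j : {j : Fin n // j ≠ i}, F x j = 0 := fun j => congrFun hxker j
  have hylo : ∀ k : Fin n, k < i → coordVec hB x (p k) = 0 := by
    intro k hk
    have := hFx ⟨k, ne_of_lt hk⟩
    simpa [hF, hk] using this
  have hzhi : ∀ k : Fin n, i < k → coordVec hC x (q k) = 0 := by
    intro k hk
    have := hFx ⟨k, ne_of_gt hk⟩
    simpa [hF, not_lt_of_gt hk] using this
  have hlow : hB.eigenvalues (p i) * (x ⬝ᵥ x) ≤ x ⬝ᵥ B.mulVec x := by
    rw [quad_coordVec hB, ← norm_coordVec hB, Finset.mul_sum]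
    rw [← Equiv.sum_comp p (fun j => hB.eigenvalues (p i) * coordVec hB x j ^ 2),
      ← Equiv.sum_comp p (fun j => hB.eigenvalues j * coordVec hB x j ^ 2)]
    apply Finset.sum_le_sum
    intro k _
    rcases lt_or_ge k i with hk | hk
    · simp [hylo k hk]
    · exact mul_le_mul_of_nonneg_right (hp hk) (sq_nonneg _)
  have hhigh : x ⬝ᵥ C.mulVec x ≤ hC.eigenvalues (q i) * (x ⬝ᵥ x) := by
    rw [quad_coordVec hC, ← norm_coordVec hC, Finset.mul_sum]
    rw [← Equiv.sum_comp q (fun j => hC.eigenvalues (q i) * coordVec hC x j ^ 2),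
      ← Equiv.sum_comp q (fun j => hC.eigenvalues j * coordVec hC x j ^ 2)]
    apply Finset.sum_le_sum
    intro k _
    rcases lt_or_ge i k with hk | hk
    · simp [hzhi k hk]
    · exact mul_le_mul_of_nonneg_right (hq hk) (sq_nonneg _)
  have hs : 0 < x ⬝ᵥ x := dotProduct_self_pos hx
  have hchain : hB.eigenvalues (p i) * (x ⬝ᵥ x) ≤ (c * hC.eigenvalues (q i)) * (x ⬝ᵥ x) := by
    calc hB.eigenvalues (p i) * (x ⬝ᵥ x) ≤ x ⬝ᵥ B.mulVec x := hlow
      _ ≤ c * (x ⬝ᵥ C.mulVec x) := h x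
      _ ≤ c * (hC.eigenvalues (q i) * (x ⬝ᵥ x)) := mul_le_mul_of_nonneg_left hhigh hc
      _ = (c * hC.eigenvalues (q i)) * (x ⬝ᵥ x) := by ring
  exact le_of_mul_le_mul_right hchain hs

lemma quad_single {n : ℕ} (A : Matrix (Fin n) (Fin n) ℝ) (hdiag : ∀ v, A v v = 0) (v : Fin n) :
    (Pi.single v 1 : Fin n → ℝ) ⬝ᵥ (lap A).mulVec (Pi.single v 1) = wdeg A v := by
  simp [lap, dotProduct, mulVec, Pi.single_apply, Finset.sum_ite_eq', mul_ite, ite_mul,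
    Finset.sum_sub_distrib, Matrix.sub_apply, Matrix.diagonal_apply, hdiag v]

lemma deg_pointwise {n : ℕ} (A A' : Matrix (Fin n) (Fin n) ℝ)
    (hdiag : ∀ v, A v v = 0) (hdiag' : ∀ v, A' v v = 0) (ε : ℝ)
    (hspars : ∀ x : Fin n → ℝ,
      (1 - ε) * (x ⬝ᵥ (lap A).mulVec x) ≤ x ⬝ᵥ (lap A').mulVec x ∧
      x ⬝ᵥ (lap A').mulVec x ≤ (1 + ε) * (x ⬝ᵥ (lap A).mulVec x)) (v : Fin n) :
    wdeg A' v ≤ (1 + ε) * wdeg A v := by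
  have h := (hspars (Pi.single v 1)).2
  rwa [quad_single A hdiag v, quad_single A' hdiag' v] at h

/-- Upper bounds on the sorted degrees of an `ε`-spectral sparsifier `Ḡ`
(adjacency `A'`) of `G` (adjacency `A`): assuming the Laplacian
eigenvalue–degree bounds for both graphs, for every `i ∈ {2, …, n}`,
`d_i(Ḡ) ≤ (1 + ε)(d_{i-1}(G) + (i-1) a(G) - δ(G_{s_{i-1}})) + Δ(Ḡ_{l_i})`,
and `d₁(Ḡ) ≤ (1 + ε) d₁(G)`. -/
theorem sparsifier_degree_upper_bounds
    {n : ℕ} (hn : 2 ≤ n) (A A' : Matrix (Fin n) (Fin n) ℝ)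
    (hsymm : A.IsSymm) (hnonneg : ∀ u v, 0 ≤ A u v) (hdiag : ∀ v, A v v = 0)
    (hsymm' : A'.IsSymm) (hnonneg' : ∀ u v, 0 ≤ A' u v) (hdiag' : ∀ v, A' v v = 0)
    (ε : ℝ) (hε0 : 0 ≤ ε) (hε1 : ε < 1)
    (hspars : ∀ x : Fin n → ℝ,
      (1 - ε) * (x ⬝ᵥ (lap A).mulVec x) ≤ x ⬝ᵥ (lap A').mulVec x ∧
      x ⬝ᵥ (lap A').mulVec x ≤ (1 + ε) * (x ⬝ᵥ (lap A).mulVec x))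
    (σ σ' : Equiv.Perm (Fin n))
    (hσ : Monotone (wdeg A ∘ σ)) (hσ' : Monotone (wdeg A' ∘ σ'))
    (hL : (lap A).IsHermitian) (hL' : (lap A').IsHermitian)
    (τ τ' : Equiv.Perm (Fin n))
    (hτ : Monotone (hL.eigenvalues ∘ τ)) (hτ' : Monotone (hL'.eigenvalues ∘ τ'))
    (hboundG : ∀ (m : ℕ) (hm2 : 2 ≤ m) (hmn : m ≤ n),
      wdeg A (σ ⟨m - 1, by omega⟩) - maxDegTop A σ ⟨m - 1, by omega⟩ ≤
        hL.eigenvalues (τ ⟨m - 1, by omega⟩) ∧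
      hL.eigenvalues (τ ⟨m - 1, by omega⟩) ≤
        wdeg A (σ ⟨m - 2, by omega⟩) + ((m : ℝ) - 1) * maxWeight (by omega) A -
          minDegBot A σ ⟨m - 2, by omega⟩)
    (hboundG' : ∀ (m : ℕ) (hm2 : 2 ≤ m) (hmn : m ≤ n),
      wdeg A' (σ' ⟨m - 1, by omega⟩) - maxDegTop A' σ' ⟨m - 1, by omega⟩ ≤
        hL'.eigenvalues (τ' ⟨m - 1, by omega⟩) ∧
      hL'.eigenvalues (τ' ⟨m - 1, by omega⟩) ≤
        wdeg A' (σ' ⟨m - 2, by omega⟩) + ((m : ℝ) - 1) * maxWeight (by omega) A' -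
          minDegBot A' σ' ⟨m - 2, by omega⟩) :
    (∀ (i : ℕ) (hi2 : 2 ≤ i) (hin : i ≤ n),
      wdeg A' (σ' ⟨i - 1, by omega⟩) ≤
        (1 + ε) * (wdeg A (σ ⟨i - 2, by omega⟩) +
            ((i : ℝ) - 1) * maxWeight (by omega) A -
            minDegBot A σ ⟨i - 2, by omega⟩) +
          maxDegTop A' σ' ⟨i - 1, by omega⟩) ∧
    wdeg A' (σ' ⟨0, by omega⟩) ≤ (1 + ε) * wdeg A (σ ⟨0, by omega⟩) := by
  constructor
  · intro i hi2 hin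
    have hi1 : (⟨i - 1, by omega⟩ : Fin n) = ⟨i - 1, by omega⟩ := rfl
    have hG' := (hboundG' i hi2 hin).1
    have hG := (hboundG i hi2 hin).2
    have heig : hL'.eigenvalues (τ' ⟨i - 1, by omega⟩) ≤
        (1 + ε) * hL.eigenvalues (τ ⟨i - 1, by omega⟩) :=
      eig_comp hL' hL (1 + ε) (by linarith) (fun x => (hspars x).2) τ' τ hτ' hτ ⟨i - 1, by omega⟩
    have hmul : (1 + ε) * hL.eigenvalues (τ ⟨i - 1, by omega⟩) ≤
        (1 + ε) * (wdeg A (σ ⟨i - 2, by omega⟩) + ((i : ℝ) - 1) * maxWeight (by omega) A -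
          minDegBot A σ ⟨i - 2, by omega⟩) :=
      mul_le_mul_of_nonneg_left hG (by linarith)
    linarith
  · have hmin : wdeg A' (σ' ⟨0, by omega⟩) ≤ wdeg A' (σ ⟨0, by omega⟩) := by
      have hk : σ' (σ'.symm (σ ⟨0, by omega⟩)) = σ ⟨0, by omega⟩ := σ'.apply_symm_apply _
      have := hσ' (a := ⟨0, by omega⟩) (b := σ'.symm (σ ⟨0, by omega⟩))
        (by simp [Fin.le_def])
      simpa [Function.comp, hk] using this
    have := deg_pointwise A A' hdiag hdiag' ε hspars (σ ⟨0, by omega⟩)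
    linarith
end
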